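/- Let q ≥ 2 and N ≥ t ≥ 0 be integers, let e ∈ S_{q,t}, and let n ∈ S_{q,N}. Then E_e D_n = √(C(N−t; n−e)/C(N;n)) · D_{n−e} if e_i ≤ n_i for all i, and E_e D_n = 0 otherwise. -/

import Mathlib

/-- The discrete simplex `S_{q,N}`: tuples of naturals of length `q` summing to `N`. -/
def simplex (q N : ℕ) : Finset (Fin q → ℕ) := Finset.Nat.antidiagonalTuple q N

/-- Multinomial coefficient `C(∑ n; n)` for a tuple of naturals. -/
def multinat {q : ℕ} (n : Fin q → ℕ) : ℕ := Nat.multinomial Finset.univ n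

/-- Multinomial coefficient for an integer tuple: `0` if some entry is negative. -/
def multZ {q : ℕ} (n : Fin q → ℤ) : ℕ :=
  if ∀ i, 0 ≤ n i then Nat.multinomial Finset.univ (fun i => (n i).toNat) else 0

/-- The `N`-qudit space `H_{q,N}`: complex-valued functions on strings `Fin N → Fin q`. -/
abbrev Hsp (q N : ℕ) := (Fin N → Fin q) → ℂ

/-- The inner product `⟨u,v⟩ = ∑_x conj (u x) · v x` on `H_{q,N}`. -/
noncomputable def hinner {q N : ℕ} (u v : Hsp q N) : ℂ :=
  ∑ x : Fin N → Fin q, (starRingEnd ℂ) (u x) * v x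

/-- The composition of a string `x : Fin N → Fin q`: `compn x i = #{k : x k = i}`. -/
def compn {q N : ℕ} (x : Fin N → Fin q) : Fin q → ℕ :=
  fun i => (Finset.univ.filter (fun k => x k = i)).card

/-- The Dicke state `D_n = C(N;n)^{-1/2} ∑_{x : comp x = n} δ_x`. -/
noncomputable def dicke {q N : ℕ} (n : Fin q → ℕ) : Hsp q N :=
  fun x => if compn x = n then (((Real.sqrt (multinat n))⁻¹ : ℝ) : ℂ) else 0

/-- The type-`j` deletion operator at position `i`: `(delAt j i v) y = v (y with j inserted
at position i)`; equivalently `delAt j i δ_x = [x i = j] · δ_{x∼i}`. -/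
def delAt {q M : ℕ} (j : Fin q) (i : Fin (M + 1)) (v : Hsp q (M + 1)) : Hsp q M :=
  fun y => v (i.insertNth j y)

/-- The composite deletion operator determined by a word `w : Fin t → Fin q` of deletion
types: the composition of `t` single deletions of types `w 0, w 1, …`, each applied at
position `1`.  For `e ∈ S_{q,t}`, the operator `E_e` is `Edel w` for any word `w` with
composition `e`. -/
def Edel {q : ℕ} : {t : ℕ} → (Fin t → Fin q) → {M : ℕ} → Hsp q (M + t) → Hsp q M
  | 0, _, _, v => v
  | _ + 1, w, _, v => Edel (fun k => w k.succ) (delAt (w 0) 0 v)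

lemma compn_insertNth {q M : ℕ} (j : Fin q) (i : Fin (M+1)) (y : Fin M → Fin q) :
    compn (i.insertNth j y) = fun k => (if j = k then 1 else 0) + compn y k := by
  funext k
  simp only [compn, Finset.card_filter]
  rw [Fin.sum_univ_succAbove _ i]
  simp

lemma compn_succ {q s : ℕ} (w : Fin (s+1) → Fin q) (k : Fin q) :
    compn w k = (if w 0 = k then 1 else 0) + compn (fun m => w m.succ) k := by
  simp only [compn, Finset.card_filter]
  rw [Fin.sum_univ_succ]

lemma multinat_pos {q : ℕ} (n : Fin q → ℕ) : 0 < multinat n := Nat.multinomial_pos _ _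

lemma delAt_zero_dicke {q M : ℕ} (j : Fin q) (n : Fin q → ℕ) :
    delAt j (0 : Fin (M+1)) (dicke (N := M+1) n) =
      (((if 1 ≤ n j then
          Real.sqrt ((multinat (fun i => n i - if j = i then 1 else 0) : ℝ) / (multinat n : ℝ))
        else 0 : ℝ)) : ℂ)
        • dicke (N := M) (fun i => n i - if j = i then 1 else 0) := by
  set n' : Fin q → ℕ := fun i => n i - if j = i then 1 else 0 with hn'
  funext y
  simp only [delAt, dicke, compn_insertNth, Pi.smul_apply, smul_eq_mul]
  by_cases hj : 1 ≤ n j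
  · have hcond : ((fun k => (if j = k then 1 else 0) + compn y k) = n) ↔ compn y = n' := by
      constructor
      · intro h; funext k
        have := congrFun h k
        simp only [hn']
        by_cases hk : j = k
        · subst hk; simp at this ⊢; omega
        · simp [hk] at this ⊢; omega
      · intro h; funext k
        have := congrFun h k
        simp only [hn'] at this
        by_cases hk : j = k
        · subst hk; simp at this ⊢; omega
        · simp [hk] at this ⊢; omega
    rw [if_pos hj]
    by_cases h : compn y = n'
    · rw [if_pos (hcond.mpr h), if_pos h]
      rw [← Complex.ofReal_mul]
      congr 1
      have h1 : (0:ℝ) < (multinat n : ℝ) := by exact_mod_cast multinat_pos n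
      have h2 : (0:ℝ) < (multinat n' : ℝ) := by exact_mod_cast multinat_pos n'
      have ha : Real.sqrt (multinat n') ≠ 0 := by positivity
      rw [Real.sqrt_div (by positivity), div_mul_eq_mul_div, mul_inv_cancel₀ ha, one_div]
    · rw [if_neg (fun hc => h (hcond.mp hc)), if_neg h, mul_zero]
  · rw [if_neg hj]
    have : ¬ ((fun k => (if j = k then 1 else 0) + compn y k) = n) := by
      intro h
      have := congrFun h j
      simp at this
      omega
    rw [if_neg this]
    simp

lemma Edel_smul {q : ℕ} : ∀ {t M : ℕ} (w : Fin t → Fin q) (c : ℂ) (v : Hsp q (M + t)),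
    Edel w (c • v) = c • Edel w v := by
  intro t
  induction t with
  | zero => intro M w c v; rfl
  | succ s ih =>
    intro M w c v
    show Edel (fun k => w k.succ) (delAt (w 0) 0 (c • v)) = _
    have hd : delAt (w 0) (0 : Fin (M + s + 1)) (c • v) = c • delAt (w 0) 0 v := rfl
    rw [hd, ih]
    rfl

lemma Edel_dicke {q : ℕ} : ∀ (t : ℕ) {M : ℕ} (e n : Fin q → ℕ), (∑ i, n i = M + t) →
    ∀ (w : Fin t → Fin q), compn w = e →
    Edel w (dicke (N := M + t) n) =
      (((if ∀ i, e i ≤ n i then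
          Real.sqrt ((multinat (fun i => n i - e i) : ℝ) / (multinat n : ℝ))
        else 0 : ℝ)) : ℂ) • dicke (N := M) (fun i => n i - e i) := by
  intro t
  induction t with
  | zero =>
    intro M e n hn w hw
    have he : e = fun _ => 0 := by
      funext i; rw [← hw]; simp [compn]
    subst he
    have h1 : (fun i => n i - (fun _ : Fin q => 0) i) = n := by funext i; simp
    show dicke n = _
    rw [h1]
    have hP : ∀ i, (fun _ : Fin q => (0:ℕ)) i ≤ n i := fun i => Nat.zero_le _
    rw [if_pos hP]
    have h2 : (0:ℝ) < (multinat n : ℝ) := by exact_mod_cast multinat_pos n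
    rw [div_self (ne_of_gt h2), Real.sqrt_one, Complex.ofReal_one, one_smul]
  | succ s ih =>
    intro M e n hn w hw
    set j := w 0 with hj0
    set δ : Fin q → ℕ := fun i => if j = i then 1 else 0 with hδ
    set n' : Fin q → ℕ := fun i => n i - δ i with hn'def
    set e' : Fin q → ℕ := compn (fun m => w m.succ) with he'
    have hee : ∀ i, e i = δ i + e' i := fun i => by rw [← hw]; exact compn_succ w i
    show Edel (fun k => w k.succ) (delAt j 0 (dicke (N := M + s + 1) n)) = _
    rw [delAt_zero_dicke, Edel_smul]
    by_cases hj : 1 ≤ n j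
    · have hδn : ∀ i, δ i ≤ n i := by
        intro i
        by_cases hk : j = i
        · subst hk; simpa [hδ] using hj
        · simp [hδ, hk]
      have hsum' : ∑ i, n' i = M + s := by
        have h1 : ∑ i, (n' i + δ i) = ∑ i, n i := by
          apply Finset.sum_congr rfl
          intro i _
          have := hδn i
          simp only [hn'def]
          omega
        have h2 : ∑ i, δ i = 1 := by
          simp only [hδ]
          rw [Finset.sum_ite_eq Finset.univ j (fun _ => 1)]
          simp
        rw [Finset.sum_add_distrib, h2] at h1
        omega
      rw [ih e' n' hsum' _ rfl]
      have hne : (fun i => n' i - e' i) = (fun i => n i - e i) := by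
        funext i
        have h1 := hee i
        have h2 := hδn i
        simp only [hn'def]
        omega
      rw [hne, smul_smul, ← Complex.ofReal_mul]
      congr 1
      have hcond : (∀ i, e' i ≤ n' i) ↔ (∀ i, e i ≤ n i) := by
        apply forall_congr'
        intro i
        have h1 := hee i
        have h2 := hδn i
        simp only [hn'def]
        omega
      rw [if_pos hj, if_congr hcond rfl rfl]
      by_cases hP : ∀ i, e i ≤ n i
      · rw [if_pos hP, if_pos hP]
        have h1 : (0:ℝ) < (multinat n : ℝ) := by exact_mod_cast multinat_pos n
        have h2 : (0:ℝ) < (multinat n' : ℝ) := by exact_mod_cast multinat_pos n'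
        rw [← Real.sqrt_mul (by positivity)]
        congr 1
        rw [show ((multinat (fun i => n i - if j = i then 1 else 0) : ℕ) : ℝ) = (multinat n' : ℝ) from rfl]
        field_simp
      · rw [if_neg hP, if_neg hP, mul_zero]
    · have hP : ¬ (∀ i, e i ≤ n i) := by
        intro hP
        have h1 := hee j
        have h2 := hP j
        simp [hδ] at h1
        omega
      rw [if_neg hj, if_neg hP]
      simp

/-- action of the composite deletion operator `E_e`, `e ∈ S_{q,t}`, on a
Dicke state `D_n`, `n ∈ S_{q,N}` with `N = M + t ≥ t`: if `e ≤ n` entrywise then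
`E_e D_n = √(C(N−t; n−e)/C(N;n)) • D_{n−e}`, and otherwise `E_e D_n = 0`. -/
theorem composite_deletion_on_dicke (q M t : ℕ) (hq : 2 ≤ q)
    (e : Fin q → ℕ) (he : ∑ i, e i = t)
    (n : Fin q → ℕ) (hn : ∑ i, n i = M + t)
    (w : Fin t → Fin q) (hw : compn w = e) :
    ((∀ i, e i ≤ n i) →
      Edel w (dicke (N := M + t) n) =
        ((Real.sqrt ((multinat (fun i => n i - e i) : ℝ) / (multinat n : ℝ)) : ℝ) : ℂ) •
          dicke (N := M) (fun i => n i - e i)) ∧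
    (¬ (∀ i, e i ≤ n i) → Edel w (dicke (N := M + t) n) = (0 : Hsp q M)) := by
  have key := Edel_dicke t e n hn w hw
  constructor
  · intro h
    rw [if_pos h] at key
    exact key
  · intro h
    rw [if_neg h] at key
    simpa using key
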